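/- arXiv:2507.00312 — 2 statements merged into one kernel-verified Lean document; each statement's English description precedes it below -/
import Mathlib

section
/- In the finite exogenous MDP with finite covariates, fix a state s₀ ∈ S and two distinct covariate values x₁, x₂ ∈ X with τ(x₁,s₀) = τ(x₂,s₀). Given a policy π and values p₁, p₂ ∈ [0,1], let π^{p₁,p₂} denote the policy equal to π except that π^{p₁,p₂}(x₁,s₀) = p₁ and π^{p₁,p₂}(x₂,s₀) = p₂. If p₁, p₂, p₁', p₂' ∈ [0,1] satisfy P_X(x₁)·p₁ + P_X(x₂)·p₂ = P_X(x₁)·p₁' + P_X(x₂)·p₂', then μ(π^{p₁,p₂}) = μ(π^{p₁',p₂'}). -/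
section Setup

variable {X : Type*} [Fintype X] [DecidableEq X] [Nonempty X]
variable {S : Type*} [Fintype S] [DecidableEq S] [Nonempty S]

/-- The transition matrix `M_π` induced by a policy `π` in the finite exogenous
MDP with finite covariates. -/
noncomputable def transMat (PX : X → ℝ) (PS : S → Bool → S → ℝ)
    (π : X → S → ℝ) : Matrix S S ℝ :=
  Matrix.of fun s s' =>
    ∑ x : X, PX x * (π x s * PS s true s' + (1 - π x s) * PS s false s')

/-- `d` is a stationary probability vector for `M_π`. -/
def IsStationaryMDP (PX : X → ℝ) (PS : S → Bool → S → ℝ)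
    (π : X → S → ℝ) (d : S → ℝ) : Prop :=
  (∀ s, 0 ≤ d s) ∧ (∑ s : S, d s = 1) ∧
    ∀ s' : S, ∑ s : S, d s * transMat PX PS π s s' = d s'

/-- The policy value `μ(π)`. -/
noncomputable def polValue (PX : X → ℝ) (η : Bool → X → S → ℝ)
    (dstat : (X → S → ℝ) → S → ℝ) (π : X → S → ℝ) : ℝ :=
  ∑ s : S, dstat π s *
    ∑ x : X, PX x * (π x s * η true x s + (1 - π x s) * η false x s)

/-- The policy `π` with its `(x₁,s₀)`-coordinate replaced by `p₁` and its
`(x₂,s₀)`-coordinate replaced by `p₂`. -/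
def updPol2 (π : X → S → ℝ) (s₀ : S) (x₁ x₂ : X) (p₁ p₂ : ℝ) : X → S → ℝ :=
  fun x s =>
    if s = s₀ ∧ x = x₁ then p₁ else if s = s₀ ∧ x = x₂ then p₂ else π x s

end Setup

/-- If `τ(x₁,s₀) = τ(x₂,s₀)` and
`P_X(x₁)p₁ + P_X(x₂)p₂ = P_X(x₁)p₁' + P_X(x₂)p₂'`, then the two modified
policies have the same value. -/
theorem policy_value_invariant_under_mass_rebalancing
    {X : Type*} [Fintype X] [DecidableEq X] [Nonempty X]
    {S : Type*} [Fintype S] [DecidableEq S] [Nonempty S]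
    (PX : X → ℝ) (hPX_pos : ∀ x, 0 < PX x) (hPX_sum : ∑ x : X, PX x = 1)
    (PS : S → Bool → S → ℝ)
    (hPS_nonneg : ∀ s w s', 0 ≤ PS s w s')
    (hPS_sum : ∀ s w, ∑ s' : S, PS s w s' = 1)
    (η : Bool → X → S → ℝ)
    (dstat : (X → S → ℝ) → S → ℝ)
    (hd_stat : ∀ π : X → S → ℝ, (∀ x s, π x s ∈ Set.Icc (0:ℝ) 1) →
      IsStationaryMDP PX PS π (dstat π))
    (hd_uniq : ∀ π : X → S → ℝ, (∀ x s, π x s ∈ Set.Icc (0:ℝ) 1) →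
      ∀ d : S → ℝ, IsStationaryMDP PX PS π d → d = dstat π)
    (π : X → S → ℝ) (hπ : ∀ x s, π x s ∈ Set.Icc (0:ℝ) 1)
    (s₀ : S) (x₁ x₂ : X) (hx : x₁ ≠ x₂)
    (hτeq : η true x₁ s₀ - η false x₁ s₀ = η true x₂ s₀ - η false x₂ s₀)
    (p₁ p₂ p₁' p₂' : ℝ)
    (hp₁ : p₁ ∈ Set.Icc (0:ℝ) 1) (hp₂ : p₂ ∈ Set.Icc (0:ℝ) 1)
    (hp₁' : p₁' ∈ Set.Icc (0:ℝ) 1) (hp₂' : p₂' ∈ Set.Icc (0:ℝ) 1)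
    (hbal : PX x₁ * p₁ + PX x₂ * p₂ = PX x₁ * p₁' + PX x₂ * p₂') :
    polValue PX η dstat (updPol2 π s₀ x₁ x₂ p₁ p₂) =
      polValue PX η dstat (updPol2 π s₀ x₁ x₂ p₁' p₂') := by

  set πa := updPol2 π s₀ x₁ x₂ p₁ p₂ with hπa
  set πb := updPol2 π s₀ x₁ x₂ p₁' p₂' with hπb
  have hmem : ∀ (q₁ q₂ : ℝ), q₁ ∈ Set.Icc (0:ℝ) 1 → q₂ ∈ Set.Icc (0:ℝ) 1 →
      ∀ x s, updPol2 π s₀ x₁ x₂ q₁ q₂ x s ∈ Set.Icc (0:ℝ) 1 := by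
    intro q₁ q₂ h1 h2 x s
    unfold updPol2
    split_ifs <;> first | exact h1 | exact h2 | exact hπ x s
  have ha := hmem p₁ p₂ hp₁ hp₂
  have hb := hmem p₁' p₂' hp₁' hp₂'
  -- key lemma
  have hkey : ∀ (s : S) (g : X → ℝ), (s = s₀ → g x₁ = g x₂) →
      ∑ x : X, PX x * πa x s * g x = ∑ x : X, PX x * πb x s * g x := by
    intro s g hg
    by_cases hs : s = s₀
    · subst hs
      have hsub : ∀ x : X, x ∈ Finset.univ → x ∉ ({x₁, x₂} : Finset X) →
          PX x * πa x s * g x - PX x * πb x s * g x = 0 := by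
        intro x _ hxmem
        simp only [Finset.mem_insert, Finset.mem_singleton, not_or] at hxmem
        have h1 : πa x s = π x s := by
          simp [hπa, updPol2, hxmem.1, hxmem.2]
        have h2 : πb x s = π x s := by
          simp [hπb, updPol2, hxmem.1, hxmem.2]
        rw [h1, h2]; ring
      have hz : ∑ x : X, (PX x * πa x s * g x - PX x * πb x s * g x) = 0 := by
        rw [← Finset.sum_subset (Finset.subset_univ ({x₁, x₂} : Finset X)) hsub]
        rw [Finset.sum_pair hx]
        have ea1 : πa x₁ s = p₁ := by simp [hπa, updPol2]
        have ea2 : πa x₂ s = p₂ := by simp [hπa, updPol2, hx.symm]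
        have eb1 : πb x₁ s = p₁' := by simp [hπb, updPol2]
        have eb2 : πb x₂ s = p₂' := by simp [hπb, updPol2, hx.symm]
        rw [ea1, ea2, eb1, eb2, ← hg rfl]
        linear_combination g x₁ * hbal
      have := Finset.sum_sub_distrib (f := fun x : X => PX x * πa x s * g x)
        (g := fun x : X => PX x * πb x s * g x) (s := Finset.univ)
      linarith [this ▸ hz]
    · apply Finset.sum_congr rfl
      intro x _
      have : πa x s = πb x s := by simp [hπa, hπb, updPol2, hs]
      rw [this]
  have hsumeq : ∀ (s : S) (g : X → ℝ), (s = s₀ → g x₁ = g x₂) →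
      ∑ x : X, PX x * (πa x s * η true x s + (1 - πa x s) * η false x s)
        = ∑ x : X, PX x * (πb x s * η true x s + (1 - πb x s) * η false x s) :=
    fun s g hg => by
      have h1 : ∀ (p : X → S → ℝ),
          ∑ x : X, PX x * (p x s * η true x s + (1 - p x s) * η false x s)
            = (∑ x : X, PX x * η false x s)
              + ∑ x : X, PX x * p x s * (η true x s - η false x s) := by
        intro p
        rw [← Finset.sum_add_distrib]
        apply Finset.sum_congr rfl
        intro x _; ring
      rw [h1 πa, h1 πb, hkey s (fun x => η true x s - η false x s)
        (by intro h; subst h; exact hτeq)]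
  -- transition matrices equal
  have hM : transMat PX PS πa = transMat PX PS πb := by
    funext s s'
    show (∑ x : X, PX x * (πa x s * PS s true s' + (1 - πa x s) * PS s false s'))
      = ∑ x : X, PX x * (πb x s * PS s true s' + (1 - πb x s) * PS s false s')
    have h1 : ∀ (p : X → S → ℝ),
        ∑ x : X, PX x * (p x s * PS s true s' + (1 - p x s) * PS s false s')
          = (∑ x : X, PX x * PS s false s')
            + ∑ x : X, PX x * p x s * (PS s true s' - PS s false s') := by
      intro p
      rw [← Finset.sum_add_distrib]
      apply Finset.sum_congr rfl
      intro x _; ring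
    rw [h1 πa, h1 πb, hkey s (fun _ => PS s true s' - PS s false s') (fun _ => rfl)]
  -- stationary distributions equal
  have hd : dstat πa = dstat πb := by
    apply hd_uniq πb hb
    have hstat := hd_stat πa ha
    obtain ⟨h0, h1, h2⟩ := hstat
    exact ⟨h0, h1, fun s' => by rw [← hM]; exact h2 s'⟩
  unfold polValue
  rw [hd]
  apply Finset.sum_congr rfl
  intro s _
  congr 1
  exact hsumeq s (fun x => η true x s - η false x s)
    (by intro h; subst h; exact hτeq)
end

section
/- In the off-policy setting with an i.i.d. sample, suppose |Y| ≤ B almost surely and |η| ≤ B_η, and let τ : 𝒳 → ℝ be measurable with atomless law under P_X. Then there is a finite constant C depending only on ν, B, and B_η such that for all n ≥ 1, the Rademacher complexity of the class of doubly robust scores indexed by threshold policies satisfies E[ sup_{g∈(0,1)} | (1/n) Σ_{i=1}^n ε_i · f_g(X_i, W_i, Y_i) | ] ≤ C / √n, where f_g(x,w,y) := η_{π^g}(x) + (π^g_w(x)/e_w(x))·(y − η(w,x)), π^g(x) := 1{τ(x) > κ_{1−g}}, κ_m := inf{t ∈ ℝ : P_X({x : τ(x) ≤ t}) ≥ m},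 π^g_1 := π^g, π^g_0 := 1 − π^g, and ε_1, …, ε_n are i.i.d. uniform on {−1, +1} and independent of the sample. -/
open MeasureTheory

private def sgnR (b : Bool) : ℝ := if b then 1 else -1

private lemma sgnR_eq (b : Bool) : sgnR b = if b then 1 else -1 := rfl

private lemma sgnR_sq (b : Bool) : sgnR b * sgnR b = 1 := by cases b <;> norm_num [sgnR]

private lemma sgnR_not (b : Bool) : sgnR (!b) = - sgnR b := by cases b <;> norm_num [sgnR]

private def flipAt {n : ℕ} (σ : Fin n → Bool) (k : Fin n) : Fin n → Bool :=
  Function.update σ k (!(σ k))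

private lemma flipAt_apply_self {n : ℕ} (σ : Fin n → Bool) (k : Fin n) :
    flipAt σ k k = !(σ k) := Function.update_self _ _ _

private lemma flipAt_apply_ne {n : ℕ} (σ : Fin n → Bool) (k j : Fin n) (h : j ≠ k) :
    flipAt σ k j = σ j := Function.update_of_ne h _ _

private lemma flipAt_invol {n : ℕ} (k : Fin n) :
    Function.Involutive (fun σ : Fin n → Bool => flipAt σ k) := by
  intro σ
  funext j
  by_cases h : j = k
  · subst h; simp [flipAt]
  · simp [flipAt, Function.update_of_ne h]

private lemma sum_mul_sgn {n : ℕ} (k : Fin n) (F : (Fin n → Bool) → ℝ)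
    (hF : ∀ σ, F (flipAt σ k) = F σ) :
    ∑ σ : Fin n → Bool, F σ * sgnR (σ k) = 0 := by
  have h := Equiv.sum_comp ((flipAt_invol k).toPerm _)
    (fun σ : Fin n → Bool => F σ * sgnR (σ k))
  have h2 : ∀ σ : Fin n → Bool,
      F (flipAt σ k) * sgnR (flipAt σ k k) = - (F σ * sgnR (σ k)) := by
    intro σ
    rw [hF, flipAt_apply_self, sgnR_not]
    ring
  have h3 : (∑ σ : Fin n → Bool, F σ * sgnR (σ k))
      = - ∑ σ : Fin n → Bool, F σ * sgnR (σ k) := by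
    calc (∑ σ : Fin n → Bool, F σ * sgnR (σ k))
        = ∑ σ : Fin n → Bool, F (flipAt σ k) * sgnR (flipAt σ k k) := h.symm
      _ = ∑ σ : Fin n → Bool, - (F σ * sgnR (σ k)) :=
          Finset.sum_congr rfl (fun σ _ => h2 σ)
      _ = - ∑ σ : Fin n → Bool, F σ * sgnR (σ k) := by rw [Finset.sum_neg_distrib]
  linarith

private noncomputable def runMax (S : ℕ → ℝ) : ℕ → ℝ
  | 0 => S 0
  | k+1 => max (runMax S k) (S (k+1))

private lemma le_runMax (S : ℕ → ℝ) : ∀ k, S k ≤ runMax S k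
  | 0 => le_refl _
  | _+1 => le_max_right _ _

private lemma runMax_mono (S : ℕ → ℝ) : Monotone (runMax S) :=
  monotone_nat_of_le_succ (fun _ => le_max_left _ _)

private lemma runMax_congr (S T : ℕ → ℝ) :
    ∀ k, (∀ j, j ≤ k → S j = T j) → runMax S k = runMax T k
  | 0, h => h 0 le_rfl
  | k+1, h => by
    show max (runMax S k) (S (k+1)) = max (runMax T k) (T (k+1))
    rw [runMax_congr S T k (fun j hj => h j (hj.trans (Nat.le_succ k))), h (k+1) le_rfl]

private lemma pathwise_sum (u : ℕ → ℝ) (n : ℕ) :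
    ∑ k ∈ Finset.range n, runMax (fun m => ∑ j ∈ Finset.range m, u j) k * u k ≤
      runMax (fun m => ∑ j ∈ Finset.range m, u j) n * (∑ j ∈ Finset.range n, u j) -
        (runMax (fun m => ∑ j ∈ Finset.range m, u j) n)^2 / 2 := by
  set S : ℕ → ℝ := fun m => ∑ j ∈ Finset.range m, u j with hS
  have hSfun : ∀ m, S m = ∑ j ∈ Finset.range m, u j := fun m => rfl
  induction n with
  | zero => simp [runMax, hS]
  | succ n ih =>
    rw [Finset.sum_range_succ]
    have hSn : S (n+1) = S n + u n := Finset.sum_range_succ u n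
    have hM : runMax S (n+1) = max (runMax S n) (S (n+1)) := rfl
    have hg : ∑ j ∈ Finset.range (n+1), u j = S n + u n := Finset.sum_range_succ u n
    have hg0 : ∑ j ∈ Finset.range n, u j = S n := rfl
    rcases le_or_gt (S (n+1)) (runMax S n) with h | h
    · rw [hM, max_eq_left h]
      rw [hg, hg0] at *
      nlinarith [ih, hSn]
    · rw [hM, max_eq_right h.le]
      rw [hg, hg0] at *
      nlinarith [ih, hSn, sq_nonneg (S (n+1) - runMax S n)]

private lemma pathwise_sq (u : ℕ → ℝ) (n : ℕ) :
    (runMax (fun m => ∑ j ∈ Finset.range m, u j) n)^2 ≤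
      4 * (∑ j ∈ Finset.range n, u j)^2 -
        4 * ∑ k ∈ Finset.range n, runMax (fun m => ∑ j ∈ Finset.range m, u j) k * u k := by
  have h := pathwise_sum u n
  nlinarith [h, sq_nonneg (runMax (fun m => ∑ j ∈ Finset.range m, u j) n
    - 2 * ∑ j ∈ Finset.range n, u j)]

private noncomputable def uu {n : ℕ} (c : ℕ → Fin n) (b : ℕ → ℝ) (σ : Fin n → Bool) (i : ℕ) : ℝ :=
  if i < n then sgnR (σ (c i)) * b i else 0

private noncomputable def SS {n : ℕ} (c : ℕ → Fin n) (b : ℕ → ℝ) (σ : Fin n → Bool) (k : ℕ) : ℝ :=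
  ∑ j ∈ Finset.range k, uu c b σ j

private lemma uu_neg {n : ℕ} (c : ℕ → Fin n) (b : ℕ → ℝ) (σ : Fin n → Bool) (i : ℕ) :
    uu c (fun i => -(b i)) σ i = - uu c b σ i := by
  unfold uu; split <;> ring

private lemma SS_neg {n : ℕ} (c : ℕ → Fin n) (b : ℕ → ℝ) (σ : Fin n → Bool) (k : ℕ) :
    SS c (fun i => -(b i)) σ k = - SS c b σ k := by
  unfold SS
  rw [← Finset.sum_neg_distrib]
  exact Finset.sum_congr rfl fun i _ => uu_neg c b σ i

private lemma SS_zero {n : ℕ} (c : ℕ → Fin n) (b : ℕ → ℝ) (σ : Fin n → Bool) :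
    SS c b σ 0 = 0 := by simp [SS]

private lemma runMax_SS_nonneg {n : ℕ} (c : ℕ → Fin n) (b : ℕ → ℝ) (σ : Fin n → Bool) (k : ℕ) :
    0 ≤ runMax (SS c b σ) k := by
  have h0 : runMax (SS c b σ) 0 = 0 := SS_zero c b σ
  calc (0:ℝ) = runMax (SS c b σ) 0 := h0.symm
    _ ≤ runMax (SS c b σ) k := runMax_mono _ (Nat.zero_le k)

private lemma SS_flip {n : ℕ} (c : ℕ → Fin n) (b : ℕ → ℝ)
    (hc : ∀ i j, i < n → j < n → c i = c j → i = j)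
    (σ : Fin n → Bool) (k : ℕ) (hk : k < n) :
    ∀ j, j ≤ k → SS c b (flipAt σ (c k)) j = SS c b σ j := by
  intro j hj
  unfold SS
  refine Finset.sum_congr rfl fun i hi => ?_
  rw [Finset.mem_range] at hi
  have hik : i ≠ k := by omega
  unfold uu
  by_cases hin : i < n
  · rw [if_pos hin, if_pos hin, flipAt_apply_ne σ (c k) (c i) (fun hcc => hik (hc i k hin hk hcc))]
  · rw [if_neg hin, if_neg hin]

private lemma SS_eq_fun {n : ℕ} (c : ℕ → Fin n) (b : ℕ → ℝ) (σ : Fin n → Bool) :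
    (fun m => ∑ j ∈ Finset.range m, uu c b σ j) = SS c b σ := rfl

private lemma sum_sq_runMax {n : ℕ} (c : ℕ → Fin n) (b : ℕ → ℝ)
    (hc : ∀ i j, i < n → j < n → c i = c j → i = j) :
    ∑ σ : Fin n → Bool, (runMax (SS c b σ) n)^2 ≤
      4 * ∑ σ : Fin n → Bool, (SS c b σ n)^2 := by
  have key : ∀ k ∈ Finset.range n,
      ∑ σ : Fin n → Bool, runMax (SS c b σ) k * uu c b σ k = 0 := by
    intro k hk
    rw [Finset.mem_range] at hk
    have hterm : ∀ σ : Fin n → Bool, runMax (SS c b σ) k * uu c b σ k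
        = (runMax (SS c b σ) k * b k) * sgnR (σ (c k)) := by
      intro σ; unfold uu; rw [if_pos hk]; ring
    rw [Finset.sum_congr rfl fun σ _ => hterm σ]
    exact sum_mul_sgn (c k) _ (fun σ => by
      rw [runMax_congr (SS c b (flipAt σ (c k))) (SS c b σ) k (SS_flip c b hc σ k hk)])
  have h1 : ∀ σ : Fin n → Bool, (runMax (SS c b σ) n)^2 ≤
      4 * (SS c b σ n)^2 - 4 * ∑ k ∈ Finset.range n, runMax (SS c b σ) k * uu c b σ k := by
    intro σ
    have := pathwise_sq (uu c b σ) n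
    rwa [SS_eq_fun] at this
  calc ∑ σ : Fin n → Bool, (runMax (SS c b σ) n)^2
      ≤ ∑ σ : Fin n → Bool, (4 * (SS c b σ n)^2
          - 4 * ∑ k ∈ Finset.range n, runMax (SS c b σ) k * uu c b σ k) :=
        Finset.sum_le_sum fun σ _ => h1 σ
    _ = 4 * (∑ σ : Fin n → Bool, (SS c b σ n)^2)
        - 4 * ∑ σ : Fin n → Bool, ∑ k ∈ Finset.range n, runMax (SS c b σ) k * uu c b σ k := by
        rw [Finset.sum_sub_distrib, ← Finset.mul_sum, ← Finset.mul_sum]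
    _ = 4 * ∑ σ : Fin n → Bool, (SS c b σ n)^2 := by
        rw [Finset.sum_comm, Finset.sum_congr rfl key]
        simp

private lemma card_fun_bool (n : ℕ) : (Fintype.card (Fin n → Bool)) = 2^n := by
  simp [Fintype.card_fun]

private lemma sum_sq_SS {n : ℕ} (c : ℕ → Fin n) (b : ℕ → ℝ)
    (hc : ∀ i j, i < n → j < n → c i = c j → i = j) :
    ∑ σ : Fin n → Bool, (SS c b σ n)^2 = 2^n * ∑ j ∈ Finset.range n, (b j)^2 := by
  classical
  have key : ∀ i ∈ Finset.range n, ∀ j ∈ Finset.range n,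
      ∑ σ : Fin n → Bool, uu c b σ i * uu c b σ j =
        if i = j then (2:ℝ)^n * (b i)^2 else 0 := by
    intro i hi j hj
    rw [Finset.mem_range] at hi hj
    by_cases hij : i = j
    · subst hij
      rw [if_pos rfl]
      have hterm : ∀ σ : Fin n → Bool, uu c b σ i * uu c b σ i = (b i)^2 := by
        intro σ
        unfold uu
        rw [if_pos hi, mul_mul_mul_comm, sgnR_sq, one_mul, sq]
      rw [Finset.sum_congr rfl fun σ _ => hterm σ, Finset.sum_const, Finset.card_univ,
        card_fun_bool, nsmul_eq_mul]
      push_cast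
      ring
    · rw [if_neg hij]
      have hterm : ∀ σ : Fin n → Bool, uu c b σ i * uu c b σ j
          = (sgnR (σ (c j)) * (b i * b j)) * sgnR (σ (c i)) := by
        intro σ; unfold uu; rw [if_pos hi, if_pos hj]; ring
      rw [Finset.sum_congr rfl fun σ _ => hterm σ]
      exact sum_mul_sgn (c i) _ (fun σ => by
        rw [flipAt_apply_ne σ (c i) (c j) (fun hcc => hij ((hc j i hj hi hcc).symm))])
  have expand : ∀ σ : Fin n → Bool, (SS c b σ n)^2 =
      ∑ i ∈ Finset.range n, ∑ j ∈ Finset.range n, uu c b σ i * uu c b σ j := by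
    intro σ
    rw [sq]
    exact Finset.sum_mul_sum _ _ _ _
  calc ∑ σ : Fin n → Bool, (SS c b σ n)^2
      = ∑ σ : Fin n → Bool, ∑ i ∈ Finset.range n, ∑ j ∈ Finset.range n,
          uu c b σ i * uu c b σ j := Finset.sum_congr rfl fun σ _ => expand σ
    _ = ∑ i ∈ Finset.range n, ∑ σ : Fin n → Bool, ∑ j ∈ Finset.range n,
          uu c b σ i * uu c b σ j := Finset.sum_comm
    _ = ∑ i ∈ Finset.range n, ∑ j ∈ Finset.range n, ∑ σ : Fin n → Bool,
          uu c b σ i * uu c b σ j :=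
        Finset.sum_congr rfl fun i _ => Finset.sum_comm
    _ = ∑ i ∈ Finset.range n, ∑ j ∈ Finset.range n,
          (if i = j then (2:ℝ)^n * (b i)^2 else 0) :=
        Finset.sum_congr rfl fun i hi => Finset.sum_congr rfl fun j hj => key i hi j hj
    _ = ∑ i ∈ Finset.range n, (2:ℝ)^n * (b i)^2 := by
        refine Finset.sum_congr rfl fun i hi => ?_
        rw [Finset.sum_ite_eq (Finset.range n) i (fun _ => (2:ℝ)^n * (b i)^2), if_pos hi]
    _ = 2^n * ∑ j ∈ Finset.range n, (b j)^2 := by rw [Finset.mul_sum]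

private lemma sum_abs_le {n : ℕ} (X : (Fin n → Bool) → ℝ) :
    ∑ σ : Fin n → Bool, |X σ| ≤
      Real.sqrt (2^n * ∑ σ : Fin n → Bool, (X σ)^2) := by
  rw [Real.le_sqrt (Finset.sum_nonneg fun σ _ => abs_nonneg _) (by positivity)]
  calc (∑ σ : Fin n → Bool, |X σ|)^2
      ≤ ((Finset.univ : Finset (Fin n → Bool)).card : ℝ) * ∑ σ : Fin n → Bool, |X σ|^2 :=
        sq_sum_le_card_mul_sum_sq (s := (Finset.univ : Finset (Fin n → Bool)))
          (f := fun σ => |X σ|)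
    _ = 2^n * ∑ σ : Fin n → Bool, (X σ)^2 := by
        rw [Finset.card_univ, card_fun_bool]
        push_cast
        simp [sq_abs]

private lemma filter_card_iff {n : ℕ} (q : Fin n → Prop) [DecidablePred q]
    (hq : ∀ j j' : Fin n, j ≤ j' → q j' → q j) (j : Fin n) :
    q j ↔ (j : ℕ) < (Finset.univ.filter q).card := by
  constructor
  · intro h
    have hsub : Finset.Iic j ⊆ Finset.univ.filter q := fun j' hj' => by
      rw [Finset.mem_filter]
      exact ⟨Finset.mem_univ _, hq j' j (Finset.mem_Iic.mp hj') h⟩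
    have hcard := Finset.card_le_card hsub
    rw [Fin.card_Iic] at hcard
    omega
  · intro h
    by_contra hq'
    have hsub : Finset.univ.filter q ⊆ Finset.Iio j := fun j'' hj'' => by
      rw [Finset.mem_filter] at hj''
      rw [Finset.mem_Iio]
      by_contra hle
      push_neg at hle
      exact hq' (hq j j'' hle hj''.2)
    have hcard := Finset.card_le_card hsub
    rw [Fin.card_Iio] at hcard
    omega

private lemma sqrt_helper {n : ℕ} (K : ℝ) (hK : 0 ≤ K) (S : (Fin n → Bool) → ℝ)
    (hS : ∑ σ : Fin n → Bool, (S σ)^2 ≤ 2^n * ((n:ℝ) * K^2)) :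
    ∑ σ : Fin n → Bool, |S σ| ≤ 2^n * (Real.sqrt n * K) := by
  calc ∑ σ : Fin n → Bool, |S σ|
      ≤ Real.sqrt (2^n * ∑ σ : Fin n → Bool, (S σ)^2) := sum_abs_le S
    _ ≤ Real.sqrt (2^n * (2^n * ((n:ℝ) * K^2))) := by
        apply Real.sqrt_le_sqrt
        have h2 : (0:ℝ) ≤ 2^n := by positivity
        nlinarith
    _ = 2^n * (Real.sqrt n * K) := by
        rw [show (2:ℝ)^n * (2^n * ((n:ℝ) * K^2)) = ((2:ℝ)^n * (Real.sqrt n * K))^2 by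
          rw [mul_pow, mul_pow, Real.sq_sqrt (Nat.cast_nonneg n)]; ring]
        exact Real.sqrt_sq (by positivity)

private lemma lemmaA {n : ℕ} (hn : 0 < n) (s : Set.Ioo (0:ℝ) 1 → ℝ)
    (t a d : Fin n → ℝ) (Ka Kd : ℝ) (hKa : 0 ≤ Ka) (hKd : 0 ≤ Kd)
    (ha : ∀ i, |a i| ≤ Ka) (hd : ∀ i, |d i| ≤ Kd) :
    ((2:ℝ)^n)⁻¹ * ∑ σ : Fin n → Bool,
      (⨆ g : Set.Ioo (0:ℝ) 1, |(n:ℝ)⁻¹ * ∑ i : Fin n,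
        (if σ i then (1:ℝ) else -1) * (a i + (if s g < t i then (1:ℝ) else 0) * d i)|)
      ≤ (Ka + 4*Kd) / Real.sqrt n := by
  classical
  haveI : Nonempty (Set.Ioo (0:ℝ) 1) := ⟨⟨1/2, by norm_num⟩⟩
  -- sorting permutation (descending in t)
  set p : Equiv.Perm (Fin n) := Tuple.sort (fun i => -(t i)) with hp
  have hsort : ∀ j j' : Fin n, j ≤ j' → t (p j') ≤ t (p j) := by
    intro j j' h
    have := Tuple.monotone_sort (fun i => -(t i)) h
    simp only [Function.comp_apply] at this
    linarith [this]
  set c : ℕ → Fin n := fun i => if h : i < n then p ⟨i, h⟩ else p ⟨0, hn⟩ with hcdef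
  have hc : ∀ i j, i < n → j < n → c i = c j → i = j := by
    intro i j hi hj hcc
    simp only [hcdef, dif_pos hi, dif_pos hj] at hcc
    exact congrArg Fin.val (p.injective hcc)
  set b : ℕ → ℝ := fun i => if h : i < n then d (p ⟨i, h⟩) else 0 with hbdef
  set cid : ℕ → Fin n := fun i => if h : i < n then ⟨i, h⟩ else ⟨0, hn⟩ with hciddef
  have hcid : ∀ i j, i < n → j < n → cid i = cid j → i = j := by
    intro i j hi hj hcc
    simp only [hciddef, dif_pos hi, dif_pos hj] at hcc
    exact congrArg Fin.val hcc
  set bid : ℕ → ℝ := fun i => if h : i < n then a ⟨i, h⟩ else 0 with hbiddef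
  -- the `a`-part is SS cid bid
  have hTa : ∀ σ : Fin n → Bool, (∑ i : Fin n, sgnR (σ i) * a i) = SS cid bid σ n := by
    intro σ
    unfold SS
    rw [← Fin.sum_univ_eq_sum_range (fun j => uu cid bid σ j) n]
    refine Finset.sum_congr rfl fun i _ => ?_
    unfold uu
    rw [if_pos i.isLt]
    simp only [hciddef, hbiddef, dif_pos i.isLt, Fin.eta]
  -- the threshold part is a prefix sum
  have hchi : ∀ (σ : Fin n → Bool) (s₀ : ℝ), ∃ k, k ≤ n ∧
      (∑ i : Fin n, sgnR (σ i) * ((if s₀ < t i then (1:ℝ) else 0) * d i)) = SS c b σ k := by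
    intro σ s₀
    set k := (Finset.univ.filter (fun j : Fin n => s₀ < t (p j))).card with hkdef
    have hkn : k ≤ n := by
      calc k ≤ (Finset.univ : Finset (Fin n)).card := Finset.card_filter_le _ _
        _ = n := by rw [Finset.card_univ, Fintype.card_fin]
    refine ⟨k, hkn, ?_⟩
    have hiff : ∀ j : Fin n, (s₀ < t (p j)) ↔ (j:ℕ) < k :=
      fun j => filter_card_iff _ (fun j j' hle hq => lt_of_lt_of_le hq (hsort j j' hle)) j
    calc ∑ i : Fin n, sgnR (σ i) * ((if s₀ < t i then (1:ℝ) else 0) * d i)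
        = ∑ j : Fin n, sgnR (σ (p j)) * ((if s₀ < t (p j) then (1:ℝ) else 0) * d (p j)) :=
          (Equiv.sum_comp p (fun i => sgnR (σ i) * ((if s₀ < t i then (1:ℝ) else 0) * d i))).symm
      _ = ∑ j : Fin n, (if (j:ℕ) < k then uu c b σ (j:ℕ) else 0) := by
          refine Finset.sum_congr rfl fun j _ => ?_
          by_cases hj : s₀ < t (p j)
          · rw [if_pos hj, if_pos ((hiff j).mp hj)]
            unfold uu
            rw [if_pos j.isLt]
            simp only [hcdef, hbdef, dif_pos j.isLt, Fin.eta]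
            ring
          · rw [if_neg hj, if_neg (fun h => hj ((hiff j).mpr h))]
            ring
      _ = ∑ j ∈ Finset.range n, (if j < k then uu c b σ j else 0) :=
          Fin.sum_univ_eq_sum_range (fun j => if j < k then uu c b σ j else 0) n
      _ = ∑ j ∈ (Finset.range n).filter (· < k), uu c b σ j := (Finset.sum_filter _ _).symm
      _ = ∑ j ∈ Finset.range k, uu c b σ j := by
          congr 1
          ext x
          simp only [Finset.mem_filter, Finset.mem_range]
          omega
      _ = SS c b σ k := rfl
  set bneg : ℕ → ℝ := fun i => -(b i) with hbnegdef
  -- pointwise bound on the supremum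
  have hXle : ∀ σ : Fin n → Bool,
      (⨆ g : Set.Ioo (0:ℝ) 1, |(n:ℝ)⁻¹ * ∑ i : Fin n,
        (if σ i then (1:ℝ) else -1) * (a i + (if s g < t i then (1:ℝ) else 0) * d i)|)
        ≤ (n:ℝ)⁻¹ * (|SS cid bid σ n|
            + (runMax (SS c b σ) n + runMax (SS c bneg σ) n)) := by
    intro σ
    apply ciSup_le
    intro g
    obtain ⟨k, hkn, hkeq⟩ := hchi σ (s g)
    have hsplit : (∑ i : Fin n,
        (if σ i then (1:ℝ) else -1) * (a i + (if s g < t i then (1:ℝ) else 0) * d i))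
        = SS cid bid σ n + SS c b σ k := by
      rw [← hTa σ, ← hkeq, ← Finset.sum_add_distrib]
      refine Finset.sum_congr rfl fun i _ => ?_
      rw [← sgnR_eq]
      ring
    rw [hsplit, abs_mul, abs_inv, Nat.abs_cast]
    apply mul_le_mul_of_nonneg_left ?_ (by positivity)
    have hMp : 0 ≤ runMax (SS c b σ) n := runMax_SS_nonneg c b σ n
    have hMm : 0 ≤ runMax (SS c bneg σ) n := runMax_SS_nonneg c bneg σ n
    have h1 : SS c b σ k ≤ runMax (SS c b σ) n :=
      le_trans (le_runMax _ k) (runMax_mono _ hkn)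
    have h2 : -(SS c b σ k) ≤ runMax (SS c bneg σ) n := by
      have : -(SS c b σ k) = SS c bneg σ k := (SS_neg c b σ k).symm
      rw [this]
      exact le_trans (le_runMax _ k) (runMax_mono _ hkn)
    calc |SS cid bid σ n + SS c b σ k| ≤ |SS cid bid σ n| + |SS c b σ k| := abs_add_le _ _
      _ ≤ |SS cid bid σ n| + (runMax (SS c b σ) n + runMax (SS c bneg σ) n) := by
          apply add_le_add (le_refl _)
          exact abs_le.mpr ⟨by linarith, by linarith⟩
  -- sum the bounds over σ
  have hb_bound : ∀ j ∈ Finset.range n, (b j)^2 ≤ Kd^2 := by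
    intro j hj
    rw [Finset.mem_range] at hj
    have : |b j| ≤ Kd := by
      simp only [hbdef, dif_pos hj]
      exact hd _
    calc (b j)^2 = |b j|^2 := (sq_abs _).symm
      _ ≤ Kd^2 := by nlinarith [abs_nonneg (b j)]
  have hbneg_bound : ∀ j ∈ Finset.range n, (bneg j)^2 ≤ Kd^2 := by
    intro j hj
    have := hb_bound j hj
    simp only [hbnegdef, neg_sq]
    exact this
  have hbid_bound : ∀ j ∈ Finset.range n, (bid j)^2 ≤ Ka^2 := by
    intro j hj
    rw [Finset.mem_range] at hj
    have : |bid j| ≤ Ka := by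
      simp only [hbiddef, dif_pos hj]
      exact ha _
    calc (bid j)^2 = |bid j|^2 := (sq_abs _).symm
      _ ≤ Ka^2 := by nlinarith [abs_nonneg (bid j)]
  have hsum_sq_bound : ∀ (bb : ℕ → ℝ) (K : ℝ), (∀ j ∈ Finset.range n, (bb j)^2 ≤ K^2) →
      ∑ j ∈ Finset.range n, (bb j)^2 ≤ (n:ℝ) * K^2 := by
    intro bb K hbb
    calc ∑ j ∈ Finset.range n, (bb j)^2 ≤ ∑ _j ∈ Finset.range n, K^2 :=
          Finset.sum_le_sum hbb
      _ = (n:ℝ) * K^2 := by rw [Finset.sum_const, Finset.card_range, nsmul_eq_mul]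
  -- bound each of the three σ-sums
  have hsum1 : ∑ σ : Fin n → Bool, |SS cid bid σ n| ≤ 2^n * (Real.sqrt n * Ka) := by
    apply sqrt_helper Ka hKa
    rw [sum_sq_SS cid bid hcid]
    have := hsum_sq_bound bid Ka hbid_bound
    have h2 : (0:ℝ) ≤ 2^n := by positivity
    nlinarith
  have hsum2 : ∀ (bb : ℕ → ℝ), (∀ j ∈ Finset.range n, (bb j)^2 ≤ Kd^2) →
      ∑ σ : Fin n → Bool, runMax (SS c bb σ) n ≤ 2^n * (Real.sqrt n * (2*Kd)) := by
    intro bb hbb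
    have habs : ∀ σ : Fin n → Bool, runMax (SS c bb σ) n = |runMax (SS c bb σ) n| :=
      fun σ => (abs_of_nonneg (runMax_SS_nonneg c bb σ n)).symm
    rw [Finset.sum_congr rfl fun σ _ => habs σ]
    apply sqrt_helper (2*Kd) (by linarith) _
    have hA := sum_sq_runMax c bb hc
    have hB := sum_sq_SS c bb hc
    have hC := hsum_sq_bound bb Kd hbb
    have h2 : (0:ℝ) ≤ 2^n := by positivity
    nlinarith
  have hsum2b := hsum2 b hb_bound
  have hsum2c := hsum2 bneg hbneg_bound
  -- put it together
  have htotal : ∑ σ : Fin n → Bool,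
      (⨆ g : Set.Ioo (0:ℝ) 1, |(n:ℝ)⁻¹ * ∑ i : Fin n,
        (if σ i then (1:ℝ) else -1) * (a i + (if s g < t i then (1:ℝ) else 0) * d i)|)
      ≤ (n:ℝ)⁻¹ * (2^n * (Real.sqrt n * Ka)
          + (2^n * (Real.sqrt n * (2*Kd)) + 2^n * (Real.sqrt n * (2*Kd)))) := by
    calc ∑ σ : Fin n → Bool, (⨆ g : Set.Ioo (0:ℝ) 1, |(n:ℝ)⁻¹ * ∑ i : Fin n,
          (if σ i then (1:ℝ) else -1) * (a i + (if s g < t i then (1:ℝ) else 0) * d i)|)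
        ≤ ∑ σ : Fin n → Bool, (n:ℝ)⁻¹ * (|SS cid bid σ n|
            + (runMax (SS c b σ) n + runMax (SS c bneg σ) n)) :=
          Finset.sum_le_sum fun σ _ => hXle σ
      _ = (n:ℝ)⁻¹ * ((∑ σ : Fin n → Bool, |SS cid bid σ n|)
          + ((∑ σ : Fin n → Bool, runMax (SS c b σ) n)
            + (∑ σ : Fin n → Bool, runMax (SS c bneg σ) n))) := by
          rw [← Finset.mul_sum, Finset.sum_add_distrib, Finset.sum_add_distrib]
      _ ≤ (n:ℝ)⁻¹ * (2^n * (Real.sqrt n * Ka)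
          + (2^n * (Real.sqrt n * (2*Kd)) + 2^n * (Real.sqrt n * (2*Kd)))) := by
          apply mul_le_mul_of_nonneg_left ?_ (by positivity)
          exact add_le_add hsum1 (add_le_add hsum2b hsum2c)
  have hs : (0:ℝ) < Real.sqrt n := Real.sqrt_pos.mpr (by exact_mod_cast hn)
  have hnn : (0:ℝ) < n := by exact_mod_cast hn
  have hkey : (n:ℝ)⁻¹ * Real.sqrt n = 1 / Real.sqrt n := by
    rw [eq_div_iff hs.ne', mul_assoc, Real.mul_self_sqrt hnn.le, inv_mul_cancel₀ hnn.ne']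
  have h2n : (0:ℝ) < 2^n := by positivity
  calc ((2:ℝ)^n)⁻¹ * ∑ σ : Fin n → Bool,
      (⨆ g : Set.Ioo (0:ℝ) 1, |(n:ℝ)⁻¹ * ∑ i : Fin n,
        (if σ i then (1:ℝ) else -1) * (a i + (if s g < t i then (1:ℝ) else 0) * d i)|)
      ≤ ((2:ℝ)^n)⁻¹ * ((n:ℝ)⁻¹ * (2^n * (Real.sqrt n * Ka)
          + (2^n * (Real.sqrt n * (2*Kd)) + 2^n * (Real.sqrt n * (2*Kd))))) :=
        mul_le_mul_of_nonneg_left htotal (by positivity)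
    _ = ((n:ℝ)⁻¹ * Real.sqrt n) * (Ka + 4*Kd) := by
        field_simp
        ring
    _ = (Ka + 4*Kd) / Real.sqrt n := by
        rw [hkey, one_div, inv_mul_eq_div]

/-- The `m`-quantile of the pushforward of `PX` under `f`:
`κ_m = inf {t : P_X(f ≤ t) ≥ m}`. -/
noncomputable def quantileOf {𝒳 : Type*} [MeasurableSpace 𝒳] (PX : Measure 𝒳)
    (f : 𝒳 → ℝ) (m : ℝ) : ℝ :=
  sInf {t : ℝ | ENNReal.ofReal m ≤ PX {x | f x ≤ t}}

/-- The threshold policy `π^g(x) = 1{τ(x) > κ_{1−g}}`. -/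
noncomputable def thrPol {𝒳 : Type*} [MeasurableSpace 𝒳] (PX : Measure 𝒳)
    (τ : 𝒳 → ℝ) (g : ℝ) (x : 𝒳) : ℝ :=
  if quantileOf PX τ (1 - g) < τ x then 1 else 0

/-- The doubly robust score of the threshold policy `π^g`, as a function of a
data point `z = (x, w, y)`:
`f_g(x,w,y) = η_{π^g}(x) + (π^g_w(x)/e_w(x)) (y − η(w,x))`. -/
noncomputable def drScoreThr {𝒳 : Type*} [MeasurableSpace 𝒳] (PX : Measure 𝒳)
    (e : 𝒳 → ℝ) (η : Bool → 𝒳 → ℝ) (τ : 𝒳 → ℝ) (g : ℝ)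
    (z : 𝒳 × Bool × ℝ) : ℝ :=
  (thrPol PX τ g z.1 * η true z.1 + (1 - thrPol PX τ g z.1) * η false z.1) +
    ((if z.2.1 then thrPol PX τ g z.1 else 1 - thrPol PX τ g z.1) /
        (if z.2.1 then e z.1 else 1 - e z.1)) *
      (z.2.2 - η z.2.1 z.1)

private noncomputable def Afn {𝒳 : Type*} (e : 𝒳 → ℝ) (η : Bool → 𝒳 → ℝ)
    (z : 𝒳 × Bool × ℝ) : ℝ :=
  η false z.1 + (if z.2.1 then 0 else (z.2.2 - η false z.1) / (1 - e z.1))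

private noncomputable def Dfn {𝒳 : Type*} (e : 𝒳 → ℝ) (η : Bool → 𝒳 → ℝ)
    (z : 𝒳 × Bool × ℝ) : ℝ :=
  η true z.1 - η false z.1 +
    (if z.2.1 then (z.2.2 - η true z.1) / (e z.1) else -((z.2.2 - η false z.1) / (1 - e z.1)))

private lemma drScore_decomp {𝒳 : Type*} [MeasurableSpace 𝒳] (PX : Measure 𝒳)
    (e : 𝒳 → ℝ) (η : Bool → 𝒳 → ℝ) (τ : 𝒳 → ℝ) (g : ℝ) (z : 𝒳 × Bool × ℝ) :
    drScoreThr PX e η τ g z =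
      Afn e η z + (if quantileOf PX τ (1 - g) < τ z.1 then (1:ℝ) else 0) * Dfn e η z := by
  obtain ⟨x, w, y⟩ := z
  simp only [drScoreThr, thrPol, Afn, Dfn]
  cases w <;> simp only [Bool.false_eq_true, if_false, if_true] <;> split_ifs <;> ring

/-- The Rademacher complexity of the class of doubly robust
scores indexed by threshold policies `{f_g : g ∈ (0,1)}` is `O(1/√n)`. -/
theorem dr_threshold_class_rademacher_bound
    {𝒳 : Type*} [MeasurableSpace 𝒳] (PX : Measure 𝒳) [IsProbabilityMeasure PX]
    (Q : Measure (𝒳 × Bool × ℝ)) [IsProbabilityMeasure Q]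
    (hQX : Q.map Prod.fst = PX)
    (ν : ℝ) (hν : ν ∈ Set.Ioc (0:ℝ) (1/2))
    (e : 𝒳 → ℝ) (he_meas : Measurable e)
    (he_bdd : ∀ x, e x ∈ Set.Icc ν (1 - ν))
    -- `P(W = 1 | X) = e(X)` a.s., stated in integral form
    (hprop : ∀ h : 𝒳 → ℝ, Measurable h → (∃ C, ∀ x, |h x| ≤ C) →
      ∫ z, (if z.2.1 then (1:ℝ) else 0) * h z.1 ∂Q = ∫ z, e z.1 * h z.1 ∂Q)
    (η : Bool → 𝒳 → ℝ) (hη_meas : ∀ w, Measurable (η w))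
    (Bη : ℝ) (hη_bdd : ∀ w x, |η w x| ≤ Bη)
    -- `E[Y | W, X] = η(W,X)` a.s., stated in integral form
    (hreg : ∀ h : Bool → 𝒳 → ℝ, (∀ w, Measurable (h w)) →
      (∃ C, ∀ w x, |h w x| ≤ C) →
      ∫ z, z.2.2 * h z.2.1 z.1 ∂Q = ∫ z, η z.2.1 z.1 * h z.2.1 z.1 ∂Q)
    (B : ℝ) (hY_bdd : ∀ᵐ z ∂Q, |z.2.2| ≤ B)
    (τ : 𝒳 → ℝ) (hτ_meas : Measurable τ)
    (hτ_atomless : ∀ t : ℝ, PX {x | τ x = t} = 0) :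
    ∃ C : ℝ, ∀ n : ℕ, 1 ≤ n →
      (∫ ω : Fin n → 𝒳 × Bool × ℝ,
          ((2 : ℝ) ^ n)⁻¹ *
            ∑ σ : Fin n → Bool,
              ⨆ g : Set.Ioo (0:ℝ) 1,
                |(n : ℝ)⁻¹ * ∑ i : Fin n,
                    (if σ i then (1:ℝ) else -1) *
                      drScoreThr PX e η τ (g : ℝ) (ω i)|
        ∂(Measure.pi fun _ : Fin n => Q)) ≤ C / Real.sqrt n := by
  classical
  obtain ⟨hν0, hν1⟩ := hν
  set Ka : ℝ := |Bη| + (|B| + |Bη|) / ν with hKadef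
  set Kd : ℝ := 2 * |Bη| + (|B| + |Bη|) / ν with hKddef
  have hKa0 : 0 ≤ Ka := by positivity
  have hKd0 : 0 ≤ Kd := by positivity
  refine ⟨Ka + 4 * Kd, ?_⟩
  intro n hn
  set μ : Measure (Fin n → 𝒳 × Bool × ℝ) := Measure.pi fun _ => Q with hμ
  haveI : IsProbabilityMeasure μ := by rw [hμ]; infer_instance
  -- a.e. the outcomes are bounded
  have hmeasy : Measurable fun z : 𝒳 × Bool × ℝ => |z.2.2| := measurable_snd.snd.abs
  have hQN : Q {z : 𝒳 × Bool × ℝ | B < |z.2.2|} = 0 := by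
    have h := ae_iff.mp hY_bdd
    simpa only [not_le] using h
  have hae : ∀ᵐ ω ∂μ, ∀ i, |(ω i).2.2| ≤ B := by
    rw [ae_all_iff]
    intro i
    rw [ae_iff]
    have hset : {ω : Fin n → 𝒳 × Bool × ℝ | ¬ |(ω i).2.2| ≤ B}
        = Set.pi Set.univ (Function.update
            (fun _ : Fin n => (Set.univ : Set (𝒳 × Bool × ℝ))) i
            {z : 𝒳 × Bool × ℝ | B < |z.2.2|}) := by
      ext ω
      simp only [Set.mem_setOf_eq, Set.mem_pi, Set.mem_univ, true_implies, not_le]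
      constructor
      · intro h j
        rcases eq_or_ne j i with rfl | hj
        · rw [Function.update_self]; exact h
        · rw [Function.update_of_ne hj]; trivial
      · intro h
        have := h i
        rwa [Function.update_self] at this
    rw [hset, hμ, Measure.pi_pi]
    refine Finset.prod_eq_zero (Finset.mem_univ i) ?_
    rw [Function.update_self]
    exact hQN
  -- pointwise bound on the integrand
  have hbdd : ∀ᵐ ω ∂μ, ‖((2:ℝ)^n)⁻¹ * ∑ σ : Fin n → Bool,
      ⨆ g : Set.Ioo (0:ℝ) 1, |(n:ℝ)⁻¹ * ∑ i : Fin n,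
        (if σ i then (1:ℝ) else -1) * drScoreThr PX e η τ (g:ℝ) (ω i)|‖
      ≤ (Ka + 4*Kd) / Real.sqrt n := by
    filter_upwards [hae] with ω hω
    set a : Fin n → ℝ := fun i => Afn e η (ω i) with hadef
    set d : Fin n → ℝ := fun i => Dfn e η (ω i) with hddef
    set t : Fin n → ℝ := fun i => τ (ω i).1 with htdef
    set sf : Set.Ioo (0:ℝ) 1 → ℝ := fun g => quantileOf PX τ (1 - (g:ℝ)) with hsfdef
    have hrw : ∀ (σ : Fin n → Bool) (g : Set.Ioo (0:ℝ) 1) (i : Fin n),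
        drScoreThr PX e η τ (g:ℝ) (ω i)
          = a i + (if sf g < t i then (1:ℝ) else 0) * d i := by
      intro σ g i
      exact drScore_decomp PX e η τ (g:ℝ) (ω i)
    -- the key quantitative bound
    have hdiv_bound : ∀ (Y ηv den : ℝ), |Y| ≤ B → |ηv| ≤ Bη → ν ≤ den →
        |(Y - ηv)/den| ≤ (|B| + |Bη|)/ν := by
      intro Y ηv den hY hηv hden
      have hden0 : 0 < den := lt_of_lt_of_le hν0 hden
      rw [abs_div, abs_of_pos hden0]
      apply div_le_div₀ (by positivity) ?_ hν0 hden
      calc |Y - ηv| ≤ |Y| + |ηv| := abs_sub _ _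
        _ ≤ |B| + |Bη| := add_le_add (le_trans hY (le_abs_self B))
            (le_trans hηv (le_abs_self Bη))
    have hfrac0 : (0:ℝ) ≤ (|B| + |Bη|)/ν := by positivity
    have habound : ∀ i, |a i| ≤ Ka := by
      intro i
      have hz := hω i
      obtain ⟨he1, he2⟩ := he_bdd (ω i).1
      have hden : ν ≤ 1 - e (ω i).1 := by linarith
      simp only [hadef, Afn]
      rcases hwi : (ω i).2.1 with _ | _
      · simp only [Bool.false_eq_true, if_false]
        calc |η false (ω i).1 + ((ω i).2.2 - η false (ω i).1) / (1 - e (ω i).1)|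
            ≤ |η false (ω i).1| + |((ω i).2.2 - η false (ω i).1) / (1 - e (ω i).1)| :=
              abs_add_le _ _
          _ ≤ |Bη| + (|B| + |Bη|)/ν := add_le_add
              (le_trans (hη_bdd false (ω i).1) (le_abs_self Bη))
              (hdiv_bound _ _ _ hz (hη_bdd false (ω i).1) hden)
      · simp only [if_true, add_zero]
        calc |η false (ω i).1| ≤ |Bη| :=
              le_trans (hη_bdd false (ω i).1) (le_abs_self Bη)
          _ ≤ Ka := by rw [hKadef]; linarith
    have hdbound : ∀ i, |d i| ≤ Kd := by
      intro i
      have hz := hω i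
      obtain ⟨he1, he2⟩ := he_bdd (ω i).1
      have hden : ν ≤ 1 - e (ω i).1 := by linarith
      have hη2 : |η true (ω i).1 - η false (ω i).1| ≤ 2 * |Bη| := by
        calc |η true (ω i).1 - η false (ω i).1|
            ≤ |η true (ω i).1| + |η false (ω i).1| := abs_sub _ _
          _ ≤ 2 * |Bη| := by
              have h1 := le_trans (hη_bdd true (ω i).1) (le_abs_self Bη)
              have h2 := le_trans (hη_bdd false (ω i).1) (le_abs_self Bη)
              linarith
      simp only [hddef, Dfn]
      rcases hwi : (ω i).2.1 with _ | _
      · simp only [Bool.false_eq_true, if_false]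
        calc |η true (ω i).1 - η false (ω i).1
              + -(((ω i).2.2 - η false (ω i).1) / (1 - e (ω i).1))|
            ≤ |η true (ω i).1 - η false (ω i).1|
              + |-(((ω i).2.2 - η false (ω i).1) / (1 - e (ω i).1))| := abs_add_le _ _
          _ ≤ 2 * |Bη| + (|B| + |Bη|)/ν := by
              rw [abs_neg]
              exact add_le_add hη2 (hdiv_bound _ _ _ hz (hη_bdd false (ω i).1) hden)
      · simp only [if_true]
        calc |η true (ω i).1 - η false (ω i).1
              + ((ω i).2.2 - η true (ω i).1) / (e (ω i).1)|
            ≤ |η true (ω i).1 - η false (ω i).1|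
              + |((ω i).2.2 - η true (ω i).1) / (e (ω i).1)| := abs_add_le _ _
          _ ≤ 2 * |Bη| + (|B| + |Bη|)/ν :=
              add_le_add hη2 (hdiv_bound _ _ _ hz (hη_bdd true (ω i).1) he1)
    have hmain := lemmaA (n := n) hn sf t a d Ka Kd hKa0 hKd0 habound hdbound
    have hpos : 0 ≤ ((2:ℝ)^n)⁻¹ * ∑ σ : Fin n → Bool,
        ⨆ g : Set.Ioo (0:ℝ) 1, |(n:ℝ)⁻¹ * ∑ i : Fin n,
          (if σ i then (1:ℝ) else -1) * drScoreThr PX e η τ (g:ℝ) (ω i)| := by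
      apply mul_nonneg (by positivity)
      apply Finset.sum_nonneg
      intro σ _
      exact Real.iSup_nonneg fun g => abs_nonneg _
    rw [Real.norm_eq_abs, abs_of_nonneg hpos]
    have heq : ((2:ℝ)^n)⁻¹ * (∑ σ : Fin n → Bool,
        ⨆ g : Set.Ioo (0:ℝ) 1, |(n:ℝ)⁻¹ * ∑ i : Fin n,
          (if σ i then (1:ℝ) else -1) * drScoreThr PX e η τ (g:ℝ) (ω i)|)
        = ((2:ℝ)^n)⁻¹ * ∑ σ : Fin n → Bool,
        (⨆ g : Set.Ioo (0:ℝ) 1, |(n:ℝ)⁻¹ * ∑ i : Fin n,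
          (if σ i then (1:ℝ) else -1)
            * (a i + (if sf g < t i then (1:ℝ) else 0) * d i)|) := by
      congr 1
      refine Finset.sum_congr rfl fun σ _ => ?_
      refine iSup_congr fun g => ?_
      congr 1
      congr 1
      refine Finset.sum_congr rfl fun i _ => ?_
      rw [hrw σ g i]
    rw [heq]
    exact hmain
  have hfin := norm_integral_le_of_norm_le_const hbdd
  rw [probReal_univ, mul_one, Real.norm_eq_abs] at hfin
  exact le_trans (le_abs_self _) hfin
end
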